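/- arXiv:1906.09106 — 2 statements merged into one kernel-verified Lean document; each statement's English description precedes it below -/
import Mathlib

section
/- Let h: [0,∞) → [0,∞) be C² with h(0)=0, h'(0)=1, h ≥ 0, satisfying h'' = k·h where k: [0,∞) → [0,∞) is continuous with ∫₀^∞ s·k(s) ds < ∞. Then there exists a constant c₀ ≥ 1 such that r ≤ h(r) ≤ c₀ r for all r ≥ 0. -/
open MeasureTheory Set Real

/-!
Since `h'' = k h ≥ 0`, `h'` increases from `h'(0) = 1`, which gives `r ≤ h(r)`, and `h` is
convex with `h(0) = 0`, which gives `h(s) ≤ s h'(s)`. Hence `h'' ≤ s k(s) h'`, and Grönwall's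
inequality bounds `h'(r)` by `exp ∫₀^r s k(s) ds ≤ exp ∫₀^∞ s k(s) ds =: c₀`,
so that `h(r) ≤ c₀ r`.
-/

section Monotonicity

variable {f f' : ℝ → ℝ} {a : ℝ}

theorem monotoneOn_Ici_of_hasDerivAt_nonneg (hf : ∀ x ∈ Ici a, HasDerivAt f (f' x) x)
    (hf' : ∀ x ∈ Ici a, 0 ≤ f' x) : MonotoneOn f (Ici a) := by
  refine monotoneOn_of_hasDerivWithinAt_nonneg (f' := f') (convex_Ici a)
    (fun x hx => (hf x hx).continuousAt.continuousWithinAt) (fun x hx => ?_) (fun x hx => ?_)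
  all_goals rw [interior_Ici] at hx
  · exact (hf x (Ioi_subset_Ici_self hx)).hasDerivWithinAt
  · exact hf' x (Ioi_subset_Ici_self hx)

theorem antitoneOn_Ici_of_hasDerivAt_nonpos (hf : ∀ x ∈ Ici a, HasDerivAt f (f' x) x)
    (hf' : ∀ x ∈ Ici a, f' x ≤ 0) : AntitoneOn f (Ici a) := fun _ hx _ hy hxy =>
  neg_le_neg_iff.1 <| monotoneOn_Ici_of_hasDerivAt_nonneg (fun x hx => (hf x hx).neg)
    (fun x hx => neg_nonneg.2 (hf' x hx)) hx hy hxy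

theorem mul_sub_le_sub_of_le_hasDerivAt {C r : ℝ} (hf : ∀ x ∈ Ici a, HasDerivAt f (f' x) x)
    (hC : ∀ x ∈ Ici a, C ≤ f' x) (hr : a ≤ r) : C * (r - a) ≤ f r - f a := by
  have hmono : MonotoneOn (fun x => f x - C * x) (Ici a) :=
    monotoneOn_Ici_of_hasDerivAt_nonneg
      (fun x hx => (hf x hx).sub ((hasDerivAt_id x).const_mul C)) (by simpa using hC)
  have := hmono self_mem_Ici hr hr
  dsimp only at this
  linarith

theorem sub_le_mul_sub_of_hasDerivAt_le {C r : ℝ} (hf : ∀ x ∈ Ici a, HasDerivAt f (f' x) x)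
    (hC : ∀ x ∈ Ici a, f' x ≤ C) (hr : a ≤ r) : f r - f a ≤ C * (r - a) := by
  have := mul_sub_le_sub_of_le_hasDerivAt (fun x hx => (hf x hx).neg) (C := -C)
    (fun x hx => neg_le_neg (hC x hx)) hr
  simp only [Pi.neg_apply] at this
  linarith

end Monotonicity

section Gronwall

variable {u u' g : ℝ → ℝ} {a r : ℝ}

theorem le_mul_exp_sub_of_hasDerivAt_le_mul {K : ℝ → ℝ}
    (hu : ∀ x ∈ Ici a, HasDerivAt u (u' x) x) (hK : ∀ x ∈ Ici a, HasDerivAt K (g x) x)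
    (hle : ∀ x ∈ Ici a, u' x ≤ g x * u x) (hr : a ≤ r) : u r ≤ u a * exp (K r - K a) := by
  have hanti : AntitoneOn (fun x => u x * exp (-K x)) (Ici a) := by
    refine antitoneOn_Ici_of_hasDerivAt_nonpos (fun x hx => (hu x hx).mul (hK x hx).neg.exp)
      fun x hx => ?_
    have := mul_le_mul_of_nonneg_left (hle x hx) (exp_nonneg (-K x))
    simp only [Pi.neg_apply]
    linarith
  calc u r = u r * exp (-K r) * exp (K r) := by rw [mul_assoc, ← exp_add]; simp
    _ ≤ u a * exp (-K a) * exp (K r) :=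
        mul_le_mul_of_nonneg_right (hanti self_mem_Ici hr hr) (exp_nonneg _)
    _ = u a * exp (K r - K a) := by rw [mul_assoc, ← exp_add]; ring_nf

/-- Extending `g` by `g a` to the left of `a` gives a continuous integrand, so the fundamental
theorem of calculus applies at `a` itself. -/
theorem hasDerivAt_integral_max_of_continuousOn (hg : ContinuousOn g (Ici a)) (hr : r ∈ Ici a) :
    HasDerivAt (fun x => ∫ t in a..x, g (max t a)) (g r) r := by
  have hcont : Continuous fun t => g (max t a) :=
    hg.comp_continuous (continuous_id.max continuous_const) fun t => le_max_right t a
  simpa [max_eq_left (mem_Ici.mp hr)] using (hcont.integral_hasStrictDerivAt a r).hasDerivAt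

theorem le_mul_exp_integral_of_hasDerivAt_le_mul (hg : ContinuousOn g (Ici a))
    (hu : ∀ x ∈ Ici a, HasDerivAt u (u' x) x) (hle : ∀ x ∈ Ici a, u' x ≤ g x * u x)
    (hr : a ≤ r) : u r ≤ u a * exp (∫ t in a..r, g t) := by
  have hint : ∫ t in a..r, g (max t a) = ∫ t in a..r, g t :=
    intervalIntegral.integral_congr fun t ht => by
      rw [max_eq_left (by rw [uIcc_of_le hr] at ht; exact ht.1)]
  simpa [hint] using le_mul_exp_sub_of_hasDerivAt_le_mul hu
    (fun x hx => hasDerivAt_integral_max_of_continuousOn hg hx) hle hr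

end Gronwall

theorem intervalIntegral_le_setIntegral_Ioi {g : ℝ → ℝ} {a r : ℝ}
    (hg : IntegrableOn g (Ioi a)) (hg_nonneg : ∀ x ∈ Ioi a, 0 ≤ g x) (hr : a ≤ r) :
    ∫ x in a..r, g x ≤ ∫ x in Ioi a, g x := by
  rw [← intervalIntegral.integral_interval_add_Ioi hg (hg.mono_set (Ioi_subset_Ioi hr))]
  exact le_add_of_nonneg_right <| setIntegral_nonneg measurableSet_Ioi fun x hx =>
    hg_nonneg x (lt_of_le_of_lt hr hx)

section Jacobi

variable {k h h' : ℝ → ℝ} {r : ℝ}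

theorem one_le_deriv_of_jacobi (hk_nonneg : ∀ s, 0 ≤ s → 0 ≤ k s)
    (hpos : ∀ s, 0 ≤ s → 0 ≤ h s) (hder2 : ∀ s, 0 ≤ s → HasDerivAt h' (k s * h s) s)
    (h'0 : h' 0 = 1) (hr : 0 ≤ r) : 1 ≤ h' r :=
  h'0 ▸ monotoneOn_Ici_of_hasDerivAt_nonneg hder2
    (fun s hs => mul_nonneg (hk_nonneg s hs) (hpos s hs)) self_mem_Ici hr hr

theorem le_mul_deriv_of_jacobi (hk_nonneg : ∀ s, 0 ≤ s → 0 ≤ k s)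
    (hpos : ∀ s, 0 ≤ s → 0 ≤ h s) (hder1 : ∀ s, 0 ≤ s → HasDerivAt h (h' s) s)
    (hder2 : ∀ s, 0 ≤ s → HasDerivAt h' (k s * h s) s) (h0 : h 0 = 0) (hr : 0 ≤ r) :
    h r ≤ r * h' r := by
  have hmono : MonotoneOn (fun s => s * h' s - h s) (Ici 0) :=
    monotoneOn_Ici_of_hasDerivAt_nonneg (f' := fun s => s * (k s * h s))
      (fun s hs => (((hasDerivAt_id s).mul (hder2 s hs)).sub (hder1 s hs)).congr_deriv
        (by simp only [id]; ring))
      fun s hs => mul_nonneg hs (mul_nonneg (hk_nonneg s hs) (hpos s hs))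
  have := hmono self_mem_Ici hr hr
  simp only [zero_mul, h0, sub_zero] at this
  linarith

theorem deriv_le_exp_integral_of_jacobi (hk_cont : ContinuousOn k (Ici 0))
    (hk_nonneg : ∀ s, 0 ≤ s → 0 ≤ k s) (hpos : ∀ s, 0 ≤ s → 0 ≤ h s)
    (hder1 : ∀ s, 0 ≤ s → HasDerivAt h (h' s) s)
    (hder2 : ∀ s, 0 ≤ s → HasDerivAt h' (k s * h s) s) (h0 : h 0 = 0) (h'0 : h' 0 = 1)
    (hr : 0 ≤ r) : h' r ≤ exp (∫ s in 0..r, s * k s) := by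
  have hle : ∀ s ∈ Ici (0 : ℝ), k s * h s ≤ s * k s * h' s := fun s hs =>
    calc k s * h s ≤ k s * (s * h' s) :=
          mul_le_mul_of_nonneg_left (le_mul_deriv_of_jacobi hk_nonneg hpos hder1 hder2 h0 hs)
            (hk_nonneg s hs)
      _ = s * k s * h' s := by ring
  simpa [h'0] using
    le_mul_exp_integral_of_hasDerivAt_le_mul (continuousOn_id.mul hk_cont) hder2 hle hr

end Jacobi

/-- Greene–Wu Jacobi-field comparison: if h ≥ 0 solves h'' = k·h, h(0) = 0,
h'(0) = 1, with k ≥ 0 continuous and ∫₀^∞ s·k(s) ds < ∞, then there is c₀ ≥ 1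
with r ≤ h(r) ≤ c₀·r for all r ≥ 0. -/
theorem greene_wu_model_comparison (k h h' : ℝ → ℝ)
    (hk_cont : ContinuousOn k (Ici 0))
    (hk_nonneg : ∀ s, 0 ≤ s → 0 ≤ k s)
    (hk_int : IntegrableOn (fun s => s * k s) (Ioi 0) volume)
    (hder1 : ∀ s, 0 ≤ s → HasDerivAt h (h' s) s)
    (hder2 : ∀ s, 0 ≤ s → HasDerivAt h' (k s * h s) s)
    (h0 : h 0 = 0) (h'0 : h' 0 = 1)
    (hpos : ∀ s, 0 ≤ s → 0 ≤ h s) :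
    ∃ c₀ ≥ (1:ℝ), ∀ r, 0 ≤ r → r ≤ h r ∧ h r ≤ c₀ * r := by
  have hsk_nonneg : ∀ s ∈ Ioi (0 : ℝ), 0 ≤ s * k s := fun s hs =>
    mul_nonneg hs.le (hk_nonneg s hs.le)
  set c₀ := exp (∫ s in Ioi 0, s * k s)
  have hderiv_le : ∀ s ∈ Ici (0 : ℝ), h' s ≤ c₀ := fun s hs =>
    (deriv_le_exp_integral_of_jacobi hk_cont hk_nonneg hpos hder1 hder2 h0 h'0 hs).trans
      (exp_le_exp.2 (intervalIntegral_le_setIntegral_Ioi hk_int hsk_nonneg hs))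
  refine ⟨c₀, one_le_exp (setIntegral_nonneg measurableSet_Ioi hsk_nonneg),
    fun r hr => ⟨?_, ?_⟩⟩
  · simpa [h0] using mul_sub_le_sub_of_le_hasDerivAt hder1
      (fun s hs => one_le_deriv_of_jacobi hk_nonneg hpos hder2 h'0 hs) hr
  · simpa [h0] using sub_le_mul_sub_of_hasDerivAt_le hder1 hderiv_le hr
end

section
/- The map F: C → M₂(C) given by F(z) = [[z+1, -z],[z, -z+1]] takes values in SL(2,C), is holomorphic with det(F'(z)) = 0 for all z, yet the Hermitian-matrix-valued derivative d(F e₃ F*)/coordinates has det[d(F e₃ F*)] identically zero, i.e. the induced symmetric (0,2)-tensor -det[d(Fe₃F*)] vanishes identically on C. -/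
open Matrix Complex

/-- The paper's counterexample: F(z) = [[z+1, -z],[z, -z+1]]. -/
noncomputable def Fcex (z : ℂ) : Matrix (Fin 2) (Fin 2) ℂ :=
  !![z + 1, -z; z, -z + 1]

/-- e₃ = diag(1,-1). -/
noncomputable def e₃cex : Matrix (Fin 2) (Fin 2) ℂ := !![1, 0; 0, -1]

/-- The map f = F e₃ F* : ℂ ≅ ℝ² → Herm(2). -/
noncomputable def fcex (x y : ℝ) : Matrix (Fin 2) (Fin 2) ℂ :=
  Fcex (x + y * Complex.I) * e₃cex * (Fcex (x + y * Complex.I))ᴴ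

/-- Partial derivative of fcex in the x-direction. -/
noncomputable def fcex_x (x y : ℝ) : Matrix (Fin 2) (Fin 2) ℂ :=
  Matrix.of fun i j => deriv (fun t => fcex t y i j) x

/-- Partial derivative of fcex in the y-direction. -/
noncomputable def fcex_y (x y : ℝ) : Matrix (Fin 2) (Fin 2) ℂ :=
  Matrix.of fun i j => deriv (fun t => fcex x t i j) y

/-! `F(z) = 1 + z N` with `N = !![1, -1; 1, -1]`, and `N e₃ Nᴴ = 0`, so
`F e₃ Fᴴ = e₃ + x • !![2, 2; 2, 2]` for `z = x + iy`. Hence `d(F e₃ Fᴴ) = !![2, 2; 2, 2] dx` takes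
values in the rank-one matrices, whose determinant vanishes. -/

lemma Matrix.hasDerivAt_add_smul_apply {𝕜 m n : Type*} [NontriviallyNormedField 𝕜]
    (A B : Matrix m n 𝕜) (i : m) (j : n) (z : 𝕜) :
    HasDerivAt (fun w : 𝕜 => (A + w • B) i j) (B i j) z := by
  simpa using ((hasDerivAt_id z).mul_const (B i j)).const_add (A i j)

lemma Fcex_eq_one_add_smul (z : ℂ) : Fcex z = 1 + z • !![1, -1; 1, -1] := by
  ext i j
  fin_cases i <;> fin_cases j <;> simp [Fcex] <;> ring

lemma det_Fcex (z : ℂ) : (Fcex z).det = 1 := by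
  simp only [Fcex, det_fin_two_of]
  ring

lemma deriv_Fcex (z : ℂ) :
    (Matrix.of fun i j => deriv (fun w => Fcex w i j) z) = !![1, -1; 1, -1] := by
  ext i j
  simp only [Fcex_eq_one_add_smul, of_apply, (hasDerivAt_add_smul_apply _ _ i j z).deriv]

lemma fcex_eq (x y : ℝ) : fcex x y = e₃cex + (x : ℂ) • !![2, 2; 2, 2] := by
  have hconj : starRingEnd ℂ ((x : ℂ) + y * I) = x - y * I := by
    simp [sub_eq_add_neg]
  ext i j
  fin_cases i <;> fin_cases j <;>
    simp [fcex, Fcex, e₃cex, mul_apply, Fin.sum_univ_two, hconj, conjTranspose_apply] <;> ring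

lemma fcex_isHermitian (x y : ℝ) : (fcex x y).IsHermitian := by
  rw [fcex_eq]
  ext i j
  fin_cases i <;> fin_cases j <;> simp [conjTranspose_apply, e₃cex]

lemma fcex_x_eq (x y : ℝ) : fcex_x x y = !![2, 2; 2, 2] := by
  ext i j
  simp only [fcex_x, fcex_eq, of_apply]
  exact (hasDerivAt_add_smul_apply _ _ i j (x : ℂ)).comp_ofReal.deriv

lemma fcex_y_eq (x y : ℝ) : fcex_y x y = 0 := by
  ext i j
  simp [fcex_y, fcex_eq]

/-- F(z) = [[z+1,-z],[z,-z+1]] takes values in SL(2,ℂ), is holomorphic with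
det F'(z) = 0 everywhere, f = F e₃ F* is Hermitian-valued, yet the symmetric
(0,2)-tensor det[d(F e₃ F*)] vanishes identically: det(u·f_x + v·f_y) = 0 for
all directions (u,v). -/
theorem counterexample_degenerate :
    (∀ z : ℂ, (Fcex z).det = 1) ∧
    (∀ i j : Fin 2, Differentiable ℂ (fun z => Fcex z i j)) ∧
    (∀ z : ℂ, (Matrix.of fun i j => deriv (fun w => Fcex w i j) z).det = 0) ∧
    (∀ x y : ℝ, (fcex x y)ᴴ = fcex x y) ∧
    (∀ x y u v : ℝ, ((u : ℂ) • fcex_x x y + (v : ℂ) • fcex_y x y).det = 0) := by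
  refine ⟨det_Fcex, fun i j => ?_, fun z => ?_, fcex_isHermitian, fun x y u v => ?_⟩
  · simp only [Fcex_eq_one_add_smul]
    exact fun z => (hasDerivAt_add_smul_apply _ _ i j z).differentiableAt
  · rw [deriv_Fcex, det_fin_two_of]
    ring
  · rw [fcex_x_eq, fcex_y_eq, smul_zero, add_zero, det_smul, det_fin_two_of]
    ring
end
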